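/- Visser's ADN theorem: Let δ be a partial computable function that is fixed point free, i.e., whenever δ(n) is defined, W_{δ(n)} ≠ W_n. Then for every partial computable function ψ there exists a total computable function f such that for all n: if ψ(n)↓ then W_{f(n)} = W_{ψ(n)}, and if ψ(n)↑ then δ(f(n))↑. -/

import Mathlib

open Part

/-- The `n`-th partial computable function in a standard numbering. -/
def phi (n : ℕ) : ℕ →. ℕ := (Denumerable.ofNat Nat.Partrec.Code n).eval

/-- `W n` is the domain of the `n`-th partial computable function. -/
def Wdom (n : ℕ) : Set ℕ := {x | (phi n x).Dom}

/-- Partial functions computable relative to a partial oracle `O`. -/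
inductive RecursiveIn' (O : ℕ →. ℕ) : (ℕ →. ℕ) → Prop
  | oracle : RecursiveIn' O O
  | zero : RecursiveIn' O (pure 0)
  | succ : RecursiveIn' O Nat.succ
  | left : RecursiveIn' O ↑fun n : ℕ => n.unpair.1
  | right : RecursiveIn' O ↑fun n : ℕ => n.unpair.2
  | pair {f g} : RecursiveIn' O f → RecursiveIn' O g →
      RecursiveIn' O fun n => Nat.pair <$> f n <*> g n
  | comp {f g} : RecursiveIn' O f → RecursiveIn' O g →
      RecursiveIn' O fun n => g n >>= f
  | prec {f g} : RecursiveIn' O f → RecursiveIn' O g →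
      RecursiveIn' O (Nat.unpaired fun a n =>
        n.rec (f a) fun y IH => do let i ← IH; g (Nat.pair a (Nat.pair y i)))
  | rfind {f} : RecursiveIn' O f →
      RecursiveIn' O fun a => Nat.rfind fun n => (fun m => m = 0) <$> f (Nat.pair a n)

open Classical in
/-- The characteristic function of a set `A` as a partial oracle. -/
noncomputable def chi (A : Set ℕ) : ℕ →. ℕ := fun n => Part.some (if n ∈ A then 1 else 0)

/-- A total function is computable relative to the set `A`. -/
def ComputableInSet (A : Set ℕ) (f : ℕ → ℕ) : Prop := RecursiveIn' (chi A) ↑f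

/-- A partial function is computable relative to the set `A`. -/
def PartComputableInSet (A : Set ℕ) (f : ℕ →. ℕ) : Prop := RecursiveIn' (chi A) f

/-- Turing reducibility between sets of naturals. -/
def TuringLe (A B : Set ℕ) : Prop := RecursiveIn' (chi B) (chi A)

/-- The halting set ∅′. -/
def K0 : Set ℕ := {n | (phi n n).Dom}

/-- `A` is computably enumerable. -/
def CE (A : Set ℕ) : Prop := REPred (· ∈ A)

/-!
By the recursion theorem with parameters there is a computable `f` such that the program
`f n` races `ψ n` against `δ (f n)` and then behaves like `φ_a`, where `a` is the value of
whichever converges first. If `δ (f n)` won with value `a`, then `W_{f n} = W_a = W_{δ (f n)}`,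
which fixed point freeness forbids. So the race, which terminates as soon as `ψ n` or
`δ (f n)` does, can only be won by `ψ n`.
-/

open Nat.Partrec

theorem partrec₂_phi : Partrec₂ phi :=
  Code.eval_part.comp ((Computable.ofNat Code).comp Computable.fst) Computable.snd

/-- Kleene's recursion theorem with parameters, for the numbering `phi`. -/
theorem exists_computable_phi_eq {G : ℕ → ℕ → ℕ →. ℕ}
    (hG : Partrec₂ fun (p : ℕ × ℕ) x => G p.1 p.2 x) :
    ∃ f : ℕ → ℕ, Computable f ∧ ∀ n, phi (f n) = G (f n) n := by
  let F : Code → ℕ →. ℕ := fun c p =>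
    G (Encodable.encode (c.curry p.unpair.1)) p.unpair.1 p.unpair.2
  have hF : Partrec₂ F := by
    have hunpair : Computable fun q : Code × ℕ => q.2.unpair :=
      Computable.unpair.comp Computable.snd
    have hindex : Computable fun q : Code × ℕ => Encodable.encode (q.1.curry q.2.unpair.1) :=
      Computable.encode.comp
        (Code.primrec₂_curry.to_comp.comp Computable.fst (Computable.fst.comp hunpair))
    exact hG.comp (hindex.pair (Computable.fst.comp hunpair)) (Computable.snd.comp hunpair)
  obtain ⟨c, hc⟩ := Code.fixed_point₂ hF
  refine ⟨fun n => Encodable.encode (c.curry n),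
    (Primrec.encode.comp (Code.primrec₂_curry.comp (Primrec.const c) Primrec.id)).to_comp,
    fun n => funext fun x => ?_⟩
  simp [phi, Code.eval_curry, hc, F]

theorem Wdom_eq_of_phi_eq_bind {e a : ℕ} {r : Part ℕ}
    (h : phi e = fun x => r.bind fun b => phi b x) (ha : a ∈ r) : Wdom e = Wdom a := by
  simp [Wdom, h, Part.eq_some_iff.2 ha]

theorem ADN_theorem (δ : ℕ →. ℕ) (hδ : Partrec δ)
    (hfpf : ∀ n, ∀ a ∈ δ n, Wdom a ≠ Wdom n)
    (ψ : ℕ →. ℕ) (hψ : Partrec ψ) :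
    ∃ f : ℕ → ℕ, Computable f ∧
      (∀ n, ∀ a ∈ ψ n, Wdom (f n) = Wdom a) ∧
      (∀ n, ¬(ψ n).Dom → ¬(δ (f n)).Dom) := by
  obtain ⟨race, hrace, hrace_spec⟩ :=
    Partrec.merge' (hψ.comp Computable.snd) (hδ.comp Computable.fst)
  obtain ⟨f, hf, hfix⟩ := exists_computable_phi_eq
    (G := fun e n x => (race (e, n)).bind fun a => phi a x)
    ((hrace.comp Computable.fst).bind
      (partrec₂_phi.comp Computable.snd (Computable.snd.comp Computable.fst)).to₂)
  have hW n a (ha : a ∈ race (f n, n)) : Wdom (f n) = Wdom a :=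
    Wdom_eq_of_phi_eq_bind (hfix n) ha
  have hwinner n a (ha : a ∈ race (f n, n)) : a ∈ ψ n :=
    ((hrace_spec _).1 a ha).resolve_right fun hδa => hfpf _ _ hδa (hW n a ha).symm
  have hterminates n (h : (ψ n).Dom ∨ (δ (f n)).Dom) : ∃ a, a ∈ race (f n, n) :=
    Part.dom_iff_mem.1 ((hrace_spec _).2.2 h)
  refine ⟨f, hf, fun n a ha => ?_, fun n hψn hδn => ?_⟩
  · obtain ⟨b, hb⟩ := hterminates n (Or.inl (Part.dom_iff_mem.2 ⟨a, ha⟩))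
    rw [hW n b hb, Part.mem_unique (hwinner n b hb) ha]
  · obtain ⟨b, hb⟩ := hterminates n (Or.inr hδn)
    exact hψn (Part.dom_iff_mem.2 ⟨b, hwinner n b hb⟩)
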